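/- Missing answers propagate to specialisations: if a ground atom e⁺ is a missing answer of a hypothesis H given background knowledge B (i.e., B ∪ H ⊭ e⁺), then e⁺ is a missing answer of every specialisation H′ of H (i.e., for every clausal theory H′ with H ⪯ H′, B ∪ H′ ⊭ e⁺). -/

import Mathlib

open FirstOrder FirstOrder.Language

/-- A literal: a signed (positive or negative) atomic `L`-formula, given by a relation
symbol applied to terms with free variables in `V`. -/
structure Lit (L : Language) (V : Type*) where
  pos : Bool
  n : ℕ
  rel : L.Relations n
  args : Fin n → L.Term V

noncomputable instance {L : Language} {V : Type*} : DecidableEq (Lit L V) :=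
  Classical.decEq _

/-- Apply a substitution `θ` (a map from variables to `L`-terms) to a literal. -/
def Lit.subst {L : Language} {V : Type*} (l : Lit L V) (θ : V → L.Term V) : Lit L V :=
  ⟨l.pos, l.n, l.rel, fun i => (l.args i).subst θ⟩

/-- Realization (truth) of a literal in structure `M` under valuation `v`. -/
def Lit.Realize {L : Language} {V : Type*} (M : Type*) [L.Structure M]
    (l : Lit L V) (v : V → M) : Prop :=
  if l.pos then Structure.RelMap l.rel (fun i => (l.args i).realize v)
  else ¬ Structure.RelMap l.rel (fun i => (l.args i).realize v)

/-- A clause: a finite set of literals. -/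
abbrev Clause (L : Language) (V : Type*) := Finset (Lit L V)

/-- Clause `C₁` subsumes clause `C₂` iff there is a substitution `θ` with `C₁θ ⊆ C₂`. -/
def Clause.Subsumes {L : Language} {V : Type*} (C₁ C₂ : Clause L V) : Prop :=
  ∃ θ : V → L.Term V, ∀ l ∈ C₁, l.subst θ ∈ C₂

/-- Semantics of a clause: the universal closure of the disjunction of its literals. -/
def Clause.Realize {L : Language} {V : Type*} (M : Type*) [L.Structure M]
    (C : Clause L V) : Prop :=
  ∀ v : V → M, ∃ l ∈ C, l.Realize M v

/-- Theory subsumption `T₁ ⪯ T₂`: every clause of `T₂` is subsumed by some clause of `T₁`. -/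
def TheorySubsumes {L : Language} {V : Type*} (T₁ T₂ : Finset (Clause L V)) : Prop :=
  ∀ C₂ ∈ T₂, ∃ C₁ ∈ T₁, Clause.Subsumes C₁ C₂

/-- `M` is a model of a set of clauses `S`. -/
def Models {L : Language} {V : Type*} (M : Type*) [L.Structure M]
    (S : Set (Clause L V)) : Prop :=
  ∀ C ∈ S, Clause.Realize M C

/-- A ground atom: a relation symbol applied to variable-free terms. -/
structure GAtom (L : Language) where
  n : ℕ
  rel : L.Relations n
  args : Fin n → L.Term Empty

/-- Truth of a ground atom in a structure. -/
def GAtom.Realize {L : Language} (M : Type*) [L.Structure M] (e : GAtom L) : Prop :=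
  Structure.RelMap e.rel fun i => (e.args i).realize (Empty.elim : Empty → M)

/-- A set of clauses `S` entails a ground atom `e`: every model of `S` satisfies `e`. -/
def Entails {L : Language} {V : Type*} (S : Set (Clause L V)) (e : GAtom L) : Prop :=
  ∀ (M : Type*) [L.Structure M], Models M S → GAtom.Realize M e

/-- `P` is a sub-program of `Q` (programs are finite multisets of clauses). -/
inductive SubProgram {L : Language} {V : Type*} :
    Multiset (Clause L V) → Multiset (Clause L V) → Prop
  | empty (Q : Multiset (Clause L V)) : SubProgram 0 Q
  | step {P Q : Multiset (Clause L V)} {Cp Cq : Clause L V} :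
      Cp ∈ P → Cq ∈ Q → Cp ⊆ Cq →
      SubProgram (P.erase Cp) (Q.erase Cq) → SubProgram P Q

/-- A set of clauses `S` entails a sentence `e`: every model of `S` satisfies `e`. -/
def EntailsSentence {L : Language} {V : Type*} (S : Set (Clause L V))
    (e : L.Sentence) : Prop :=
  ∀ (M : Type*) [L.Structure M], Models M S → M ⊨ e

/-! Subsumption is sound: a model of `C₁` satisfies `C₁θ` under every valuation `v`, because
`C₁θ` under `v` is `C₁` under the valuation `x ↦ ⟦θ x⟧ v`; and `C₁θ ⊆ C₂`. Hence every model
of `B ∪ H` is a model of `B ∪ H'`, so whatever `B ∪ H'` entails, `B ∪ H` entails too. -/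

section Soundness

variable {L : Language} {V : Type*} {M : Type*} [L.Structure M]

theorem Lit.realize_subst (l : Lit L V) (θ : V → L.Term V) (v : V → M) :
    (l.subst θ).Realize M v ↔ l.Realize M fun x => (θ x).realize v := by
  simp only [Lit.Realize, Lit.subst, Term.realize_subst]

theorem Clause.Realize.of_subsumes {C₁ C₂ : Clause L V} (hsub : C₁.Subsumes C₂)
    (h : C₁.Realize M) : C₂.Realize M := by
  obtain ⟨θ, hθ⟩ := hsub
  intro v
  obtain ⟨l, hl, hlv⟩ := h fun x => (θ x).realize v
  exact ⟨l.subst θ, hθ l hl, (l.realize_subst θ v).2 hlv⟩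

theorem Models.of_theorySubsumes {T₁ T₂ : Finset (Clause L V)} (hsub : TheorySubsumes T₁ T₂)
    (h : Models M (T₁ : Set (Clause L V))) : Models M (T₂ : Set (Clause L V)) := by
  intro C₂ hC₂
  obtain ⟨C₁, hC₁, hsub₁⟩ := hsub C₂ hC₂
  exact (h C₁ hC₁).of_subsumes hsub₁

theorem Models.mono {S T : Set (Clause L V)} (hST : S ⊆ T) (h : Models M T) : Models M S :=
  fun C hC => h C (hST hC)

theorem Models.union {S T : Set (Clause L V)} (hS : Models M S) (hT : Models M T) :
    Models M (S ∪ T) := by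
  rintro C (hC | hC)
  exacts [hS C hC, hT C hC]

end Soundness

theorem Entails.of_theorySubsumes {L : Language} {V : Type*} {B : Set (Clause L V)}
    {T₁ T₂ : Finset (Clause L V)} {e : GAtom L} (hsub : TheorySubsumes T₁ T₂)
    (h : Entails (B ∪ ↑T₂) e) : Entails (B ∪ ↑T₁) e :=
  fun M _ hM => h M <| .union (hM.mono Set.subset_union_left)
    (.of_theorySubsumes hsub (hM.mono Set.subset_union_right))

/-- Missing answers propagate to specialisations: if `B ∪ H ⊭ e⁺` then for every
specialisation `H'` of `H` (i.e. `H ⪯ H'`), `B ∪ H' ⊭ e⁺`. -/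
theorem missing_answer_propagates {L : Language} {V : Type*}
    (B : Set (Clause L V)) (H : Finset (Clause L V)) (e : GAtom L)
    (hmiss : ¬ Entails (B ∪ ↑H) e) :
    ∀ H' : Finset (Clause L V), TheorySubsumes H H' → ¬ Entails (B ∪ ↑H') e :=
  fun _ hsub hent => hmiss (hent.of_theorySubsumes hsub)
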